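/- (Compatibility of transverse cones with the face partial order) Let F be a face of a convex polyhedral cone C in a Euclidean space. Then the set of faces of the transverse cone t(C,F) equals {t(G,F) : F ⪯ G ⪯ C}, i.e., every face of t(C,F) is of the form t(G,F) for a face G of C containing F, and conversely. -/

import Mathlib

/-!
Write `P` for the projection onto `(span F)ᗮ`. A face of `P '' C` cut out by `k` pulls back to
the face `C ∩ P⁻¹' H` of `C` cut out by `k ∘ P`, which contains `F` because `P` kills `F`.
Conversely, a functional cutting out a face `G ⊇ F` vanishes on `span F`, hence is unchanged by
`P`, so it also cuts the face `P '' G` out of `P '' C`.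
-/

/-- The closed convex polyhedral cone generated by vectors `v 0, …, v (n-1)`. -/
def polyCone {V : Type*} [AddCommGroup V] [Module ℝ V] {n : ℕ} (v : Fin n → V) : Set V :=
  {x | ∃ c : Fin n → ℝ, (∀ i, 0 ≤ c i) ∧ x = ∑ i, c i • v i}

/-- `C` is a (closed convex) polyhedral cone. -/
def IsPolyCone {V : Type*} [AddCommGroup V] [Module ℝ V] (C : Set V) : Prop :=
  ∃ (n : ℕ) (v : Fin n → V), C = polyCone v

/-- `F` is a face of the cone `C` (cut out by a supporting linear functional). -/
def IsFace {V : Type*} [AddCommGroup V] [Module ℝ V] (C F : Set V) : Prop :=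
  ∃ ℓ : V →ₗ[ℝ] ℝ, (∀ x ∈ C, ℓ x ≤ 0) ∧ F = {x ∈ C | ℓ x = 0}

variable {V : Type*} [NormedAddCommGroup V] [InnerProductSpace ℝ V] [FiniteDimensional ℝ V]

/-- The transverse cone `t(C,F)`: the image of `C` under the orthogonal projection onto
the orthogonal complement of the linear span of `F`. -/
noncomputable def tCone (C F : Set V) : Set V :=
  (fun x => (Submodule.orthogonalProjectionOnto (Submodule.span ℝ F)ᗮ x : V)) '' C

section Faces

variable {E W : Type*} [AddCommGroup E] [Module ℝ E] [AddCommGroup W] [Module ℝ W]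

theorem IsFace.subset {C F : Set E} (hF : IsFace C F) : F ⊆ C := by
  obtain ⟨ℓ, -, rfl⟩ := hF
  exact fun _ hx => hx.1

theorem IsFace.zero_mem {C F : Set E} (hF : IsFace C F) (hC : (0 : E) ∈ C) : (0 : E) ∈ F := by
  obtain ⟨ℓ, -, rfl⟩ := hF
  exact ⟨hC, map_zero ℓ⟩

theorem IsFace.of_subset {C F G : Set E} (hF : IsFace C F) (hFG : F ⊆ G) (hGC : G ⊆ C) :
    IsFace G F := by
  obtain ⟨ℓ, hℓC, rfl⟩ := hF
  exact ⟨ℓ, fun x hx => hℓC x (hGC hx), Set.ext fun x =>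
    ⟨fun hx => ⟨hFG hx, hx.2⟩, fun hx => ⟨hGC hx.1, hx.2⟩⟩⟩

theorem IsFace.inter_preimage {C : Set E} {H : Set W} (P : E →ₗ[ℝ] W) (hH : IsFace (P '' C) H) :
    IsFace C (C ∩ P ⁻¹' H) := by
  obtain ⟨k, hkC, rfl⟩ := hH
  exact ⟨k ∘ₗ P, fun x hx => hkC (P x) ⟨x, hx, rfl⟩, Set.ext fun x =>
    ⟨fun hx => ⟨hx.1, hx.2.2⟩, fun hx => ⟨hx.1, ⟨x, hx.1, rfl⟩, hx.2⟩⟩⟩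

theorem isFace_image_setOf_comp_eq_zero {C : Set E} (P : E →ₗ[ℝ] W) (m : W →ₗ[ℝ] ℝ)
    (hmC : ∀ x ∈ C, m (P x) ≤ 0) :
    IsFace (P '' C) (P '' {x ∈ C | m (P x) = 0}) := by
  refine ⟨m, ?_, Set.ext fun y => ⟨?_, ?_⟩⟩
  · rintro _ ⟨x, hx, rfl⟩
    exact hmC x hx
  · rintro ⟨x, hx, rfl⟩
    exact ⟨⟨x, hx.1, rfl⟩, hx.2⟩
  · rintro ⟨⟨x, hx, rfl⟩, hmx⟩
    exact ⟨x, ⟨hx, hmx⟩, rfl⟩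

end Faces

theorem map_starProjection_orthogonal_of_le_ker {E : Type*} [NormedAddCommGroup E]
    [InnerProductSpace ℝ E] {K : Submodule ℝ E} [K.HasOrthogonalProjection]
    (m : E →ₗ[ℝ] ℝ) (hm : K ≤ LinearMap.ker m) (x : E) : m (Kᗮ.starProjection x) = m x := by
  rw [Submodule.starProjection_orthogonal_val, map_sub, hm (K.starProjection_apply_mem x),
    sub_zero]

theorem tCone_eq_image (C F : Set V) :
    tCone C F = ((Submodule.span ℝ F)ᗮ.starProjection : V →ₗ[ℝ] V) '' C :=
  rfl

theorem faces_of_tCone_general (C F : Set V) (hF : IsFace C F) :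
    ∀ H : Set V, IsFace (tCone C F) H ↔
      ∃ G : Set V, IsFace C G ∧ IsFace G F ∧ H = tCone G F := by
  intro H
  simp only [tCone_eq_image]
  set K := Submodule.span ℝ F
  set P : V →ₗ[ℝ] V := Kᗮ.starProjection
  constructor
  · intro hH
    have hG := hH.inter_preimage P
    have hFG : F ⊆ C ∩ P ⁻¹' H := by
      intro x hx
      have hPx : P x = 0 := K.starProjection_orthogonal_apply_eq_zero (Submodule.subset_span hx)
      have hH0 : (0 : V) ∈ H := hH.zero_mem (hPx ▸ ⟨x, hF.subset hx, rfl⟩)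
      exact ⟨hF.subset hx, by rwa [Set.mem_preimage, hPx]⟩
    refine ⟨C ∩ P ⁻¹' H, hG, hF.of_subset hFG hG.subset, ?_⟩
    rw [Set.image_inter_preimage, Set.inter_eq_right.mpr hH.subset]
  · rintro ⟨G, ⟨m, hmC, rfl⟩, hGF, rfl⟩
    have hmP : ∀ x, m (P x) = m x := map_starProjection_orthogonal_of_le_ker m <|
      Submodule.span_le.mpr fun x hx => (hGF.subset hx).2
    have hface := isFace_image_setOf_comp_eq_zero (C := C) P m fun x hx => hmP x ▸ hmC x hx
    simpa only [hmP] using hface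

/-- compatibility of transverse cones with the face partial order: the
faces of the transverse cone `t(C,F)` are exactly the cones `t(G,F)` for faces `G` of `C`
containing `F`. -/
theorem faces_of_tCone (C F : Set V) (hC : IsPolyCone C) (hF : IsFace C F) :
    ∀ H : Set V, IsFace (tCone C F) H ↔
      ∃ G : Set V, IsFace C G ∧ IsFace G F ∧ H = tCone G F :=
  faces_of_tCone_general C F hF
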